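/- arXiv:1509.01225 — 5 statements merged into one kernel-verified Lean document; each statement's English description precedes it below -/
import Mathlib

section
/- There exist positive constants K1, K2 such that for all ε1≥0 and ε2>0, writing r=√(ε1²+ε2²), one has K1/r ≤ (F(ε1/ε2)−P)/ε2 ≤ K2/r. -/
/-!
Writing `a = S + T - 2P > 0` and `b = R - P > 0`, the quantity `(F(ε₁/ε₂) - P)/ε₂` equals
`(a ε₁ + b ε₂)/(ε₁ + ε₂)²`. Its numerator lies between `min a b · (ε₁ + ε₂)` and
`max a b · (ε₁ + ε₂)`, and on the nonnegative quadrant the `ℓ¹`-norm `ε₁ + ε₂` is comparable to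
the Euclidean norm `r`: `r ≤ ε₁ + ε₂ ≤ 2r`.
-/

/-- The pay-off `F(ρ) = (Pρ² + (S+T)ρ + R)/(1+ρ)²` of ATFT against itself. -/
noncomputable def F (P S T R ρ : ℝ) : ℝ := (P * ρ ^ 2 + (S + T) * ρ + R) / (1 + ρ) ^ 2

lemma F_div_sub_div (P S T R : ℝ) {x y : ℝ} (hy : y ≠ 0) (hxy : x + y ≠ 0) :
    (F P S T R (x / y) - P) / y = ((S + T - 2 * P) * x + (R - P) * y) / (x + y) ^ 2 := by
  unfold F
  rw [one_add_div hy, add_comm y x]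
  field_simp
  ring

section

variable {a b x y : ℝ}

lemma min_mul_add_le_mul_add_mul (hx : 0 ≤ x) (hy : 0 ≤ y) :
    min a b * (x + y) ≤ a * x + b * y := by
  nlinarith [mul_le_mul_of_nonneg_right (min_le_left a b) hx,
    mul_le_mul_of_nonneg_right (min_le_right a b) hy]

lemma mul_add_mul_le_max_mul_add (hx : 0 ≤ x) (hy : 0 ≤ y) :
    a * x + b * y ≤ max a b * (x + y) := by
  nlinarith [mul_le_mul_of_nonneg_right (le_max_left a b) hx,
    mul_le_mul_of_nonneg_right (le_max_right a b) hy]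

lemma sqrt_sq_add_sq_le_add (hx : 0 ≤ x) (hy : 0 ≤ y) : √(x ^ 2 + y ^ 2) ≤ x + y :=
  (Real.sqrt_le_left (add_nonneg hx hy)).2 (by nlinarith [mul_nonneg hx hy])

lemma add_le_two_mul_sqrt_sq_add_sq (x y : ℝ) : x + y ≤ 2 * √(x ^ 2 + y ^ 2) := by
  have := Real.le_sqrt_of_sq_le (x := (x + y) / 2) (y := x ^ 2 + y ^ 2)
    (by nlinarith [sq_nonneg (x - y)])
  linarith

end

theorem stmt_1_general (T R P S : ℝ) (hRP : R > P)
    (hlow : P < (S + T) / 2) :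
    ∃ K1 K2 : ℝ, 0 < K1 ∧ 0 < K2 ∧
      ∀ ε1 ε2 : ℝ, 0 ≤ ε1 → 0 < ε2 →
        K1 / Real.sqrt (ε1 ^ 2 + ε2 ^ 2) ≤ (F P S T R (ε1 / ε2) - P) / ε2 ∧
        (F P S T R (ε1 / ε2) - P) / ε2 ≤ K2 / Real.sqrt (ε1 ^ 2 + ε2 ^ 2) := by
  set a := S + T - 2 * P
  set b := R - P
  have hmin : 0 < min a b := lt_min (by linarith) (by linarith)
  refine ⟨min a b / 2, max a b, by positivity, hmin.trans_le min_le_max, ?_⟩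
  intro ε1 ε2 h1 h2
  have hs : 0 < ε1 + ε2 := by linarith
  rw [F_div_sub_div P S T R h2.ne' hs.ne']
  constructor
  · calc min a b / 2 / √(ε1 ^ 2 + ε2 ^ 2)
        ≤ min a b / (ε1 + ε2) := by
          rw [div_div, div_le_div_iff_of_pos_left hmin (by positivity) hs]
          exact add_le_two_mul_sqrt_sq_add_sq ε1 ε2
      _ = min a b * (ε1 + ε2) / (ε1 + ε2) ^ 2 := by field_simp
      _ ≤ (a * ε1 + b * ε2) / (ε1 + ε2) ^ 2 := by
          gcongr; exact min_mul_add_le_mul_add_mul h1 h2.le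
  · calc (a * ε1 + b * ε2) / (ε1 + ε2) ^ 2
        ≤ max a b * (ε1 + ε2) / (ε1 + ε2) ^ 2 := by
          gcongr; exact mul_add_mul_le_max_mul_add h1 h2.le
      _ = max a b / (ε1 + ε2) := by field_simp
      _ ≤ max a b / √(ε1 ^ 2 + ε2 ^ 2) := by
          gcongr
          exact sqrt_sq_add_sq_le_add h1 h2.le

theorem stmt_1 (T R P S : ℝ) (hTR : T > R) (hRP : R > P) (hPS : P > S)
    (hlow : P < (S + T) / 2) (hup : (S + T) / 2 < R) :
    ∃ K1 K2 : ℝ, 0 < K1 ∧ 0 < K2 ∧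
      ∀ ε1 ε2 : ℝ, 0 ≤ ε1 → 0 < ε2 →
        K1 / Real.sqrt (ε1 ^ 2 + ε2 ^ 2) ≤ (F P S T R (ε1 / ε2) - P) / ε2 ∧
        (F P S T R (ε1 / ε2) - P) / ε2 ≤ K2 / Real.sqrt (ε1 ^ 2 + ε2 ^ 2) :=
  stmt_1_general T R P S hRP hlow
end

section
/- For all ε1,ε2>0 with ε1+ε2<1 and all q∈[0,1], a13(q) − a31(q) = ε1(T−S)q/(q+(1−q)(ε1+ε2)); consequently a13(q) > a31(q) for every q∈(0,1], and the function q ↦ a13(q) − a31(q) is strictly increasing on [0,1]. -/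
/-- The pay-off `a13(q)` of ATFT against the generous strategy G = r(1,q). -/
noncomputable def a13 (T R P S ε1 ε2 q : ℝ) : ℝ :=
  ((R - T) + (P - S)) * ε1 ^ 2 * (1 - q) / (q + (1 - q) * (ε1 + ε2)) ^ 2
    - (ε1 / (q + (1 - q) * (ε1 + ε2))) *
        ((2 * R - S - T + (T - R) * (ε1 + ε2)) / (1 - ε1 - ε2))
    + (R * (1 - ε2) - ε1 * S) / (1 - ε1 - ε2)

/-- The pay-off `a31(q)` of the generous strategy G = r(1,q) against ATFT. -/
noncomputable def a31 (T R P S ε1 ε2 q : ℝ) : ℝ :=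
  ((R - T) + (P - S)) * ε1 ^ 2 / ((1 - ε1 - ε2) * (q + (1 - q) * (ε1 + ε2)) ^ 2)
    - (ε1 / (q + (1 - q) * (ε1 + ε2))) *
        ((2 * R - S - T - (ε1 * (T - P) + ε2 * (R - S))) / (1 - ε1 - ε2))
    + (R * (1 - ε2) - ε1 * T) / (1 - ε1 - ε2)

lemma add_one_sub_mul_pos {q s : ℝ} (hs : 0 < s) (hq : q ∈ Set.Icc (0 : ℝ) 1) :
    0 < q + (1 - q) * s := by
  obtain ⟨hq0, hq1⟩ := hq
  nlinarith [mul_nonneg (sub_nonneg.2 hq1) hs.le]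

lemma strictMonoOn_div_add_one_sub_mul {s : ℝ} (hs : 0 < s) :
    StrictMonoOn (fun q => q / (q + (1 - q) * s)) (Set.Icc (0 : ℝ) 1) := by
  intro p hp q hq hpq
  rw [div_lt_div_iff₀ (add_one_sub_mul_pos hs hp) (add_one_sub_mul_pos hs hq)]
  -- after cross-multiplying, the `p * q` terms cancel and `p * s < q * s` remains
  nlinarith [mul_lt_mul_of_pos_right hpq hs]

lemma a13_sub_a31 (T R P S ε1 ε2 q : ℝ) (hx : q + (1 - q) * (ε1 + ε2) ≠ 0)
    (hD : 1 - ε1 - ε2 ≠ 0) :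
    a13 T R P S ε1 ε2 q - a31 T R P S ε1 ε2 q
      = ε1 * (T - S) * q / (q + (1 - q) * (ε1 + ε2)) := by
  unfold a13 a31
  field_simp
  ring

theorem stmt_3_general (T R P S : ℝ) (hTR : T > R)
    (hup : (S + T) / 2 < R)
    (ε1 ε2 : ℝ) (hε1 : 0 < ε1) (hε2 : 0 < ε2) (hsum : ε1 + ε2 < 1) :
    (∀ q ∈ Set.Icc (0 : ℝ) 1,
      a13 T R P S ε1 ε2 q - a31 T R P S ε1 ε2 q
        = ε1 * (T - S) * q / (q + (1 - q) * (ε1 + ε2))) ∧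
    (∀ q ∈ Set.Ioc (0 : ℝ) 1, a13 T R P S ε1 ε2 q > a31 T R P S ε1 ε2 q) ∧
    StrictMonoOn (fun q => a13 T R P S ε1 ε2 q - a31 T R P S ε1 ε2 q)
      (Set.Icc (0 : ℝ) 1) := by
  have hs : 0 < ε1 + ε2 := by positivity
  have hc : 0 < ε1 * (T - S) := mul_pos hε1 (by linarith)
  have hdiff : ∀ q ∈ Set.Icc (0 : ℝ) 1, a13 T R P S ε1 ε2 q - a31 T R P S ε1 ε2 q
      = ε1 * (T - S) * q / (q + (1 - q) * (ε1 + ε2)) := fun q hq =>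
    a13_sub_a31 T R P S ε1 ε2 q (add_one_sub_mul_pos hs hq).ne' (by linarith)
  refine ⟨hdiff, fun q hq => ?_, fun p hp q hq hpq => ?_⟩
  · have hqI : q ∈ Set.Icc (0 : ℝ) 1 := Set.Ioc_subset_Icc_self hq
    have hpos : 0 < ε1 * (T - S) * q / (q + (1 - q) * (ε1 + ε2)) :=
      div_pos (mul_pos hc hq.1) (add_one_sub_mul_pos hs hqI)
    linarith [hdiff q hqI]
  · simp only [hdiff p hp, hdiff q hq, mul_div_assoc]
    exact mul_lt_mul_of_pos_left (strictMonoOn_div_add_one_sub_mul hs hp hq hpq) hc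

theorem stmt_3 (T R P S : ℝ) (hTR : T > R) (hRP : R > P) (hPS : P > S)
    (hlow : P < (S + T) / 2) (hup : (S + T) / 2 < R)
    (ε1 ε2 : ℝ) (hε1 : 0 < ε1) (hε2 : 0 < ε2) (hsum : ε1 + ε2 < 1) :
    (∀ q ∈ Set.Icc (0 : ℝ) 1,
      a13 T R P S ε1 ε2 q - a31 T R P S ε1 ε2 q
        = ε1 * (T - S) * q / (q + (1 - q) * (ε1 + ε2))) ∧
    (∀ q ∈ Set.Ioc (0 : ℝ) 1, a13 T R P S ε1 ε2 q > a31 T R P S ε1 ε2 q) ∧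
    StrictMonoOn (fun q => a13 T R P S ε1 ε2 q - a31 T R P S ε1 ε2 q)
      (Set.Icc (0 : ℝ) 1) :=
  stmt_3_general T R P S hTR hup ε1 ε2 hε1 hε2 hsum
end

section
/- There exists r0>0 such that for all ε1,ε2>0 with √(ε1²+ε2²)<r0: for every α ∈ (F(ε1/ε2), R+(T−R)ε1) the equation a13(q)=α has exactly one root q in the open interval (0,1), and for every β ∈ (F(ε1/ε2), R−(R−S)ε1) the equation a31(q)=β has exactly one root q in (0,1). -/
/-!
Substituting `x = q + (1 - q)(ε1 + ε2)`, which increases from `s = ε1 + ε2` to `1` as `q` runs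
over `[0, 1]`, turns both payoffs into functions `a / x² + b / x + c`. Such a function is strictly
increasing on `[s, 1]` once `2a + bt < 0` at `t = s` and `t = 1`, because this sign condition is
affine in `t` and `g x₂ - g x₁` is a positive multiple of `-((2a + b x₁) x₂ + (2a + b x₂) x₁)`.
For small `ε1, ε2` the two sign conditions follow from the Prisoner's Dilemma inequalities, and
at `q = 0` and `q = 1` the payoffs take the values `F(ε1/ε2)` and the right ends of the intervals,
so the intermediate value theorem gives a root and strict monotonicity makes it unique.
-/

open Set

theorem StrictMonoOn.existsUnique_mem_Ioo_eq {α δ : Type*} [ConditionallyCompleteLinearOrder α]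
    [TopologicalSpace α] [OrderTopology α] [DenselyOrdered α] [LinearOrder δ]
    [TopologicalSpace δ] [OrderClosedTopology δ] {a b : α} {f : α → δ} {y : δ} (hab : a ≤ b)
    (hmono : StrictMonoOn f (Icc a b)) (hcont : ContinuousOn f (Icc a b))
    (hy : y ∈ Ioo (f a) (f b)) : ∃! x, x ∈ Ioo a b ∧ f x = y := by
  obtain ⟨x, hx, hfx⟩ := intermediate_value_Ioo hab hcont hy
  refine ⟨x, ⟨hx, hfx⟩, fun x' ⟨hx', hfx'⟩ => ?_⟩
  exact hmono.injOn (Ioo_subset_Icc_self hx') (Ioo_subset_Icc_self hx) (hfx'.trans hfx.symm)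

theorem strictMonoOn_div_sq_add_div {a b s : ℝ} (c : ℝ) (hs : 0 < s)
    (hs1 : 2 * a + b * s < 0) (h1 : 2 * a + b < 0) :
    StrictMonoOn (fun x => a / x ^ 2 + b / x + c) (Icc s 1) := by
  have hneg : ∀ t ∈ Icc s 1, 2 * a + b * t < 0 := fun t ⟨hst, ht1⟩ => by
    rcases le_total 0 b with hb | hb <;> nlinarith
  intro x₁ hx₁ x₂ hx₂ hlt
  have hx₁0 : 0 < x₁ := hs.trans_le hx₁.1
  have hx₂0 : 0 < x₂ := hs.trans_le hx₂.1
  have hdiff : a / x₂ ^ 2 + b / x₂ + c - (a / x₁ ^ 2 + b / x₁ + c)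
      = (x₂ - x₁) * -((2 * a + b * x₁) * x₂ + (2 * a + b * x₂) * x₁) / (2 * x₁ ^ 2 * x₂ ^ 2) := by
    field_simp
    ring
  have hpos : 0 < (x₂ - x₁) * -((2 * a + b * x₁) * x₂ + (2 * a + b * x₂) * x₁)
      / (2 * x₁ ^ 2 * x₂ ^ 2) := by
    have := mul_neg_of_neg_of_pos (hneg x₁ hx₁) hx₂0
    have := mul_neg_of_neg_of_pos (hneg x₂ hx₂) hx₁0
    exact div_pos (mul_pos (sub_pos.2 hlt) (by linarith)) (by positivity)
  dsimp only
  linarith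

theorem existsUnique_mem_Ioo_div_sq_add_div {f : ℝ → ℝ} {a b c s y : ℝ} (hs : 0 < s) (hs1 : s < 1)
    (hneg_s : 2 * a + b * s < 0) (hneg_one : 2 * a + b < 0)
    (hf : EqOn f (fun q => a / (q + (1 - q) * s) ^ 2 + b / (q + (1 - q) * s) + c) (Icc 0 1))
    (hy : y ∈ Ioo (f 0) (f 1)) : ∃! q, q ∈ Ioo 0 1 ∧ f q = y := by
  have hmix : StrictMono fun q : ℝ => q + (1 - q) * s := fun q₁ q₂ h => by nlinarith
  have hmaps : MapsTo (fun q : ℝ => q + (1 - q) * s) (Icc 0 1) (Icc s 1) := fun q ⟨h0, h1⟩ =>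
    ⟨by nlinarith, by nlinarith⟩
  have hmono : StrictMonoOn f (Icc 0 1) :=
    ((strictMonoOn_div_sq_add_div c hs hneg_s hneg_one).comp (hmix.strictMonoOn _) hmaps).congr
      hf.symm
  have hcont : ContinuousOn f (Icc 0 1) := by
    refine ContinuousOn.congr ?_ hf
    have hne : ∀ q ∈ Icc (0 : ℝ) 1, q + (1 - q) * s ≠ 0 := fun q hq =>
      (hs.trans_le (hmaps hq).1).ne'
    fun_prop (disch := simp_all)
  exact hmono.existsUnique_mem_Ioo_eq zero_le_one hcont hy

section Payoffs

variable {T R P S ε1 ε2 q : ℝ}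

theorem a13_eq_div_sq_add_div (hD : 1 - ε1 - ε2 ≠ 0) (hx : q + (1 - q) * (ε1 + ε2) ≠ 0) :
    a13 T R P S ε1 ε2 q
      = ((R - T) + (P - S)) * ε1 ^ 2 / (1 - ε1 - ε2) / (q + (1 - q) * (ε1 + ε2)) ^ 2
        + -((((R - T) + (P - S)) * ε1 ^ 2 + ε1 * (2 * R - S - T + (T - R) * (ε1 + ε2)))
            / (1 - ε1 - ε2)) / (q + (1 - q) * (ε1 + ε2))
        + (R * (1 - ε2) - ε1 * S) / (1 - ε1 - ε2) := by
  unfold a13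
  field_simp
  ring

theorem a31_eq_div_sq_add_div (hD : 1 - ε1 - ε2 ≠ 0) (hx : q + (1 - q) * (ε1 + ε2) ≠ 0) :
    a31 T R P S ε1 ε2 q
      = ((R - T) + (P - S)) * ε1 ^ 2 / (1 - ε1 - ε2) / (q + (1 - q) * (ε1 + ε2)) ^ 2
        + -(ε1 * (2 * R - S - T - (ε1 * (T - P) + ε2 * (R - S))) / (1 - ε1 - ε2))
            / (q + (1 - q) * (ε1 + ε2))
        + (R * (1 - ε2) - ε1 * T) / (1 - ε1 - ε2) := by
  unfold a31
  field_simp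
  ring

theorem F_div_eq (hε2 : ε2 ≠ 0) (hs : ε1 + ε2 ≠ 0) :
    F P S T R (ε1 / ε2) = (P * ε1 ^ 2 + (S + T) * ε1 * ε2 + R * ε2 ^ 2) / (ε1 + ε2) ^ 2 := by
  have h : 1 + ε1 / ε2 = (ε1 + ε2) / ε2 := by field_simp; ring
  rw [F, h]
  field_simp

theorem a13_zero (hε2 : ε2 ≠ 0) (hs : ε1 + ε2 ≠ 0) (hD : 1 - ε1 - ε2 ≠ 0) :
    a13 T R P S ε1 ε2 0 = F P S T R (ε1 / ε2) := by
  rw [F_div_eq hε2 hs, a13]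
  simp only [zero_add, sub_zero, one_mul]
  field_simp
  ring

theorem a31_zero (hε2 : ε2 ≠ 0) (hs : ε1 + ε2 ≠ 0) (hD : 1 - ε1 - ε2 ≠ 0) :
    a31 T R P S ε1 ε2 0 = F P S T R (ε1 / ε2) := by
  rw [F_div_eq hε2 hs, a31]
  simp only [zero_add, sub_zero, one_mul]
  field_simp
  ring

theorem a13_one (hD : 1 - ε1 - ε2 ≠ 0) : a13 T R P S ε1 ε2 1 = R + (T - R) * ε1 := by
  unfold a13
  field_simp
  ring

theorem a31_one (hD : 1 - ε1 - ε2 ≠ 0) : a31 T R P S ε1 ε2 1 = R - (R - S) * ε1 := by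
  unfold a31
  field_simp
  ring

theorem existsUnique_a13_eq (hε1 : 0 < ε1) (hε2 : 0 < ε2) (hs1 : ε1 + ε2 < 1)
    (hTR : T > R) (hRP : R > P) (hPS : P > S) (hlow : P < (S + T) / 2) (hup : (S + T) / 2 < R) :
    ∀ α ∈ Ioo (F P S T R (ε1 / ε2)) (R + (T - R) * ε1),
      ∃! q, q ∈ Ioo (0 : ℝ) 1 ∧ a13 T R P S ε1 ε2 q = α := by
  intro α hα
  have hD : 0 < 1 - ε1 - ε2 := by linarith
  set G := (R - T) + (P - S)
  set C := 2 * R - S - T + (T - R) * (ε1 + ε2)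
  have hC : 0 < C := by nlinarith
  have hG_lt : G < C := by nlinarith
  have hG_lt' : G * (2 - (ε1 + ε2)) < C := by nlinarith
  refine existsUnique_mem_Ioo_div_sq_add_div (s := ε1 + ε2) (by positivity) hs1 ?_ ?_
    (fun q hq => a13_eq_div_sq_add_div hD.ne' (ne_of_gt (by nlinarith [hq.1, hq.2]))) ?_
  · have : 2 * (G * ε1 ^ 2 / (1 - ε1 - ε2)) + -((G * ε1 ^ 2 + ε1 * C) / (1 - ε1 - ε2)) * (ε1 + ε2)
        = ε1 * (G * ε1 * (2 - (ε1 + ε2)) - C * (ε1 + ε2)) / (1 - ε1 - ε2) := by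
      field_simp
      ring
    rw [this]
    refine div_neg_of_neg_of_pos (mul_neg_of_pos_of_neg hε1 ?_) hD
    rcases le_or_gt G 0 with hG | hG <;> nlinarith
  · have : 2 * (G * ε1 ^ 2 / (1 - ε1 - ε2)) + -((G * ε1 ^ 2 + ε1 * C) / (1 - ε1 - ε2))
        = ε1 * (G * ε1 - C) / (1 - ε1 - ε2) := by
      field_simp
      ring
    rw [this]
    refine div_neg_of_neg_of_pos (mul_neg_of_pos_of_neg hε1 ?_) hD
    rcases le_or_gt G 0 with hG | hG <;> nlinarith
  · rwa [a13_zero hε2.ne' (by positivity) hD.ne', a13_one hD.ne']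

theorem existsUnique_a31_eq (hε1 : 0 < ε1) (hε2 : 0 < ε2) (hs1 : ε1 + ε2 < 1)
    (hX : ε1 * (T - P) + ε2 * (R - S) < 2 * R - S - T)
    (hY : ε1 * (T - P) + ε2 * (R - S) < S + T - 2 * P) :
    ∀ β ∈ Ioo (F P S T R (ε1 / ε2)) (R - (R - S) * ε1),
      ∃! q, q ∈ Ioo (0 : ℝ) 1 ∧ a31 T R P S ε1 ε2 q = β := by
  intro β hβ
  have hD : 0 < 1 - ε1 - ε2 := by linarith
  set G := (R - T) + (P - S)
  set C := 2 * R - S - T - (ε1 * (T - P) + ε2 * (R - S))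
  have hC : 0 < C := by linarith
  have hG_lt : 2 * G < C := by linarith
  have hlt_s : 2 * G * ε1 < C * (ε1 + ε2) := by
    rcases le_or_gt G 0 with hG | hG <;> nlinarith
  refine existsUnique_mem_Ioo_div_sq_add_div (s := ε1 + ε2) (by positivity) hs1 ?_ ?_
    (fun q hq => a31_eq_div_sq_add_div hD.ne' (ne_of_gt (by nlinarith [hq.1, hq.2]))) ?_
  · have : 2 * (G * ε1 ^ 2 / (1 - ε1 - ε2)) + -(ε1 * C / (1 - ε1 - ε2)) * (ε1 + ε2)
        = ε1 * (2 * G * ε1 - C * (ε1 + ε2)) / (1 - ε1 - ε2) := by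
      field_simp
      ring
    rw [this]
    exact div_neg_of_neg_of_pos (mul_neg_of_pos_of_neg hε1 (by linarith)) hD
  · have : 2 * (G * ε1 ^ 2 / (1 - ε1 - ε2)) + -(ε1 * C / (1 - ε1 - ε2))
        = ε1 * (2 * G * ε1 - C) / (1 - ε1 - ε2) := by
      field_simp
      ring
    rw [this]
    exact div_neg_of_neg_of_pos (mul_neg_of_pos_of_neg hε1 (by nlinarith)) hD
  · rwa [a31_zero hε2.ne' (by positivity) hD.ne', a31_one hD.ne']

end Payoffs

theorem stmt_6 (T R P S : ℝ) (hTR : T > R) (hRP : R > P) (hPS : P > S)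
    (hlow : P < (S + T) / 2) (hup : (S + T) / 2 < R) :
    ∃ r0 : ℝ, 0 < r0 ∧
      ∀ ε1 ε2 : ℝ, 0 < ε1 → 0 < ε2 → Real.sqrt (ε1 ^ 2 + ε2 ^ 2) < r0 →
        (∀ α ∈ Set.Ioo (F P S T R (ε1 / ε2)) (R + (T - R) * ε1),
          ∃! q : ℝ, q ∈ Set.Ioo (0 : ℝ) 1 ∧ a13 T R P S ε1 ε2 q = α) ∧
        (∀ β ∈ Set.Ioo (F P S T R (ε1 / ε2)) (R - (R - S) * ε1),
          ∃! q : ℝ, q ∈ Set.Ioo (0 : ℝ) 1 ∧ a31 T R P S ε1 ε2 q = β) := by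
  set m := min (2 * R - S - T) (S + T - 2 * P)
  have hm : 0 < m := lt_min (by linarith) (by linarith)
  have hM : 0 < (T - P) + (R - S) := by linarith
  set r0 := min (1 / 2) (m / ((T - P) + (R - S)))
  have hr0_half : r0 ≤ 1 / 2 := min_le_left _ _
  have hr0_m : r0 * ((T - P) + (R - S)) ≤ m := (le_div_iff₀ hM).1 (min_le_right _ _)
  refine ⟨r0, lt_min one_half_pos (div_pos hm hM), fun ε1 ε2 hε1 hε2 hr => ?_⟩
  have hε1r : ε1 < r0 := (Real.le_sqrt_of_sq_le (by nlinarith)).trans_lt hr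
  have hε2r : ε2 < r0 := (Real.le_sqrt_of_sq_le (by nlinarith)).trans_lt hr
  have hs1 : ε1 + ε2 < 1 := by linarith
  have hδ : ε1 * (T - P) + ε2 * (R - S) < m := by nlinarith
  exact ⟨existsUnique_a13_eq hε1 hε2 hs1 hTR hRP hPS hlow hup,
    existsUnique_a31_eq hε1 hε2 hs1 (hδ.trans_le (min_le_left _ _))
      (hδ.trans_le (min_le_right _ _))⟩
end

section
/- There exists r0>0 such that for all ε1,ε2>0 with √(ε1²+ε2²)<r0 and all q ∈ (ε2,1] with a13(q) ≠ R: setting x1(P132) = 1/(1 + (a31(q)−F(ε1/ε2))/(a13(q)−R)), one has 0 < x1(P132) < 1 if and only if a13(q) > R. (The green equilibrium is biological if and only if q exceeds the unique root q_green of a13(q)=R.) -/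
/-! The fixed point `P132` lies strictly inside the edge exactly when `a13(q) - R` has the sign of
`a31(q) - F(ε1/ε2)`. Clearing denominators, `a31(q) - F(ε1/ε2)` is `ε1 q / (δ x)²` times an explicit
polynomial in `δ = ε1 + ε2`, `x = x(q)` and `ε1`, whose leading part `δ x (2R - S - T)` is
positive and dominates the rest once `δ` is small, so `a31(q) > F(ε1/ε2)` near the origin. -/

/-- The paper's `x(q)`. -/
noncomputable def xq (ε1 ε2 q : ℝ) : ℝ := q + (1 - q) * (ε1 + ε2)

noncomputable def gapNum (T R P S δ x ε1 : ℝ) : ℝ :=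
  δ * x * (2 * R - S - T - δ * (R - S)) + (R + P - S - T) * ε1 * (δ * x - δ - x)

lemma F_div {P S T R ε1 ε2 : ℝ} (hε2 : ε2 ≠ 0) (hδ : ε1 + ε2 ≠ 0) :
    F P S T R (ε1 / ε2) = (P * ε1 ^ 2 + (S + T) * ε1 * ε2 + R * ε2 ^ 2) / (ε1 + ε2) ^ 2 := by
  have hδ' : ε2 + ε1 ≠ 0 := by rwa [add_comm]
  rw [F]
  field_simp
  ring

lemma a31_sub_F_eq {T R P S ε1 ε2 q : ℝ} (hε2 : ε2 ≠ 0) (hδ : ε1 + ε2 ≠ 0)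
    (hδ1 : 1 - ε1 - ε2 ≠ 0) (hx : xq ε1 ε2 q ≠ 0) :
    a31 T R P S ε1 ε2 q - F P S T R (ε1 / ε2) =
      ε1 * q * gapNum T R P S (ε1 + ε2) (xq ε1 ε2 q) ε1 / ((ε1 + ε2) ^ 2 * xq ε1 ε2 q ^ 2) := by
  rw [F_div hε2 hδ, a31, gapNum]
  rw [xq] at hx ⊢
  field_simp
  ring

/-- For `G1 = R + P - S - T ≥ 0` use `2R - S - T = 2 G1 + (S + T - 2P)`; for `G1 < 0` the
correction `-G1 ε1 (δ + x - δ x)` is itself nonnegative. -/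
lemma gapNum_pos {T R P S δ x ε1 : ℝ} (hε1 : 0 ≤ ε1) (hε1δ : ε1 ≤ δ) (hδ : 0 < δ)
    (hδx : δ ≤ x) (hx : x ≤ 1) (hc : δ * (R - S) < 2 * R - S - T)
    (hd : δ * (R - S) < S + T - 2 * P) :
    0 < gapNum T R P S δ x ε1 := by
  have hδx0 : 0 < δ * x := mul_pos hδ (hδ.trans_le hδx)
  rw [gapNum]
  rcases le_or_gt 0 (R + P - S - T) with hG | hG
  · have hlead : 0 < δ * x * (S + T - 2 * P - δ * (R - S)) := mul_pos hδx0 (by linarith)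
    have hrest : 0 ≤ (R + P - S - T) * (δ * (x - ε1) + x * (δ - ε1) + ε1 * (δ * x)) := by
      apply mul_nonneg hG
      have := mul_nonneg hδ.le (sub_nonneg.2 (hε1δ.trans hδx))
      have := mul_nonneg (hδ.trans_le hδx).le (sub_nonneg.2 hε1δ)
      positivity
    linarith [hlead, hrest]
  · have hlead : 0 < δ * x * (2 * R - S - T - δ * (R - S)) := mul_pos hδx0 (by linarith)
    have hrest : 0 ≤ (-(R + P - S - T)) * ε1 * (δ * (1 - x) + x) :=
      mul_nonneg (mul_nonneg (by linarith) hε1) (by nlinarith)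
    linarith [hlead, hrest]

lemma a31_sub_F_pos {T R P S ε1 ε2 q : ℝ} (hε1 : 0 < ε1) (hε2 : 0 < ε2)
    (hδ1 : ε1 + ε2 < 1) (hc : (ε1 + ε2) * (R - S) < 2 * R - S - T)
    (hd : (ε1 + ε2) * (R - S) < S + T - 2 * P) (hq : q ∈ Set.Ioc 0 1) :
    0 < a31 T R P S ε1 ε2 q - F P S T R (ε1 / ε2) := by
  obtain ⟨hq0, hq1⟩ := hq
  have hδx : ε1 + ε2 ≤ xq ε1 ε2 q := by
    have : 0 ≤ q * (1 - (ε1 + ε2)) := mul_nonneg hq0.le (by linarith)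
    rw [xq]; linarith
  have hx1 : xq ε1 ε2 q ≤ 1 := by
    have : 0 ≤ (1 - q) * (1 - (ε1 + ε2)) := mul_nonneg (by linarith) (by linarith)
    rw [xq]; linarith
  have hx0 : 0 < xq ε1 ε2 q := by linarith
  rw [a31_sub_F_eq hε2.ne' (by positivity) (by linarith) hx0.ne']
  have := gapNum_pos (T := T) hε1.le (by linarith) (by positivity) hδx hx1 hc hd
  positivity

lemma one_div_one_add_div_mem_Ioo_iff {N A : ℝ} (hN : 0 < N) :
    (0 < 1 / (1 + N / A) ∧ 1 / (1 + N / A) < 1) ↔ 0 < A := by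
  refine ⟨fun ⟨hpos, hlt1⟩ => ?_, fun hA => ?_⟩
  · have hden : 0 < 1 + N / A := one_div_pos.1 hpos
    have : 0 < N / A := by linarith [(div_lt_one hden).1 hlt1]
    exact (div_pos_iff_of_pos_left hN).1 this
  · have : 0 < N / A := div_pos hN hA
    exact ⟨by positivity, (div_lt_one (by linarith)).2 (by linarith)⟩

lemma add_lt_of_sqrt_sq_add_sq_lt {a b r : ℝ} (h : √(a ^ 2 + b ^ 2) < r) : a + b < 2 * r := by
  have hasq : a ≤ √(a ^ 2 + b ^ 2) := Real.le_sqrt_of_sq_le (by nlinarith)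
  have hbsq : b ≤ √(a ^ 2 + b ^ 2) := Real.le_sqrt_of_sq_le (by nlinarith)
  linarith

theorem stmt_10_general (T R P S : ℝ) (hRP : R > P) (hPS : P > S)
    (hlow : P < (S + T) / 2) (hup : (S + T) / 2 < R) :
    ∃ r0 : ℝ, 0 < r0 ∧
      ∀ ε1 ε2 : ℝ, 0 < ε1 → 0 < ε2 → Real.sqrt (ε1 ^ 2 + ε2 ^ 2) < r0 →
        ∀ q ∈ Set.Ioc ε2 1, a13 T R P S ε1 ε2 q ≠ R →
          ((0 < 1 / (1 + (a31 T R P S ε1 ε2 q - F P S T R (ε1 / ε2)) /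
                (a13 T R P S ε1 ε2 q - R)) ∧
            1 / (1 + (a31 T R P S ε1 ε2 q - F P S T R (ε1 / ε2)) /
                (a13 T R P S ε1 ε2 q - R)) < 1)
            ↔ a13 T R P S ε1 ε2 q > R) := by
  have hRS : 0 < R - S := by linarith
  set m := min (2 * R - S - T) (S + T - 2 * P)
  have hm : 0 < m := lt_min (by linarith) (by linarith)
  refine ⟨min 1 (m / (R - S)) / 2, by positivity, ?_⟩
  intro ε1 ε2 hε1 hε2 hr q ⟨hq0, hq1⟩ _
  have hδ := add_lt_of_sqrt_sq_add_sq_lt hr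
  rw [mul_div_cancel₀ _ two_ne_zero] at hδ
  have hδm : (ε1 + ε2) * (R - S) < m :=
    (lt_div_iff₀ hRS).1 (hδ.trans_le (min_le_right _ _))
  have hN := a31_sub_F_pos hε1 hε2 (hδ.trans_le (min_le_left _ _))
    (hδm.trans_le (min_le_left _ _)) (hδm.trans_le (min_le_right _ _)) ⟨hε2.trans hq0, hq1⟩
  rw [one_div_one_add_div_mem_Ioo_iff hN, sub_pos, gt_iff_lt]

theorem stmt_10 (T R P S : ℝ) (hTR : T > R) (hRP : R > P) (hPS : P > S)
    (hlow : P < (S + T) / 2) (hup : (S + T) / 2 < R) :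
    ∃ r0 : ℝ, 0 < r0 ∧
      ∀ ε1 ε2 : ℝ, 0 < ε1 → 0 < ε2 → Real.sqrt (ε1 ^ 2 + ε2 ^ 2) < r0 →
        ∀ q ∈ Set.Ioc ε2 1, a13 T R P S ε1 ε2 q ≠ R →
          ((0 < 1 / (1 + (a31 T R P S ε1 ε2 q - F P S T R (ε1 / ε2)) /
                (a13 T R P S ε1 ε2 q - R)) ∧
            1 / (1 + (a31 T R P S ε1 ε2 q - F P S T R (ε1 / ε2)) /
                (a13 T R P S ε1 ε2 q - R)) < 1)
            ↔ a13 T R P S ε1 ε2 q > R) :=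
  stmt_10_general T R P S hRP hPS hlow hup
end

section
/- There exist K>0 and r0>0 such that for all ε1,ε2>0 with √(ε1²+ε2²)<r0, the unique root q_green ∈ (0,1) of the equation a13(q)=R satisfies |q_green − (2R−S−T)/(R−S) + G1(T−R)ε1/((R−S)(2R−S−T))| ≤ K(ε1²+ε2²). In particular q_green = (2R−S−T)/(R−S) − G1(T−R)ε1/((R−S)(2R−S−T)) + O(r²). -/
open Set

def a13Numerator (A B C G ε s q : ℝ) : ℝ :=
  A * (q + (1 - q) * s) ^ 2 - (C + B * s) * (q + (1 - q) * s) + G * ε * (1 - q) * (1 - s)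

theorem a13_sub_eq (T R P S ε1 ε2 q : ℝ) (hx : q + (1 - q) * (ε1 + ε2) ≠ 0)
    (hs : 1 - ε1 - ε2 ≠ 0) :
    a13 T R P S ε1 ε2 q - R =
      ε1 * a13Numerator (R - S) (T - R) (2 * R - S - T) ((R - T) + (P - S)) ε1 (ε1 + ε2) q
        / ((q + (1 - q) * (ε1 + ε2)) ^ 2 * (1 - ε1 - ε2)) := by
  unfold a13 a13Numerator
  field_simp
  ring

theorem a13Numerator_eq_zero_of_a13_eq {T R P S ε1 ε2 q : ℝ} (hε1 : ε1 ≠ 0)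
    (hx : q + (1 - q) * (ε1 + ε2) ≠ 0) (hs : 1 - ε1 - ε2 ≠ 0) (h : a13 T R P S ε1 ε2 q = R) :
    a13Numerator (R - S) (T - R) (2 * R - S - T) ((R - T) + (P - S)) ε1 (ε1 + ε2) q = 0 := by
  have := a13_sub_eq T R P S ε1 ε2 q hx hs
  rw [h, sub_self, eq_comm, div_eq_zero_iff] at this
  simpa [hε1, hx, hs] using this

def a13Slope (A B C G ε s q q' : ℝ) : ℝ :=
  (1 - s) * (A * (q + (1 - q) * s + (q' + (1 - q') * s)) - (C + B * s) - G * ε)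

theorem a13Numerator_sub (A B C G ε s q q' : ℝ) :
    a13Numerator A B C G ε s q - a13Numerator A B C G ε s q' =
      (q - q') * a13Slope A B C G ε s q q' := by
  unfold a13Numerator a13Slope; ring

section
variable {A B C G : ℝ}

theorem sub_max_le_mul_of_a13Numerator_eq_zero {ε s q : ℝ} (hB : 0 ≤ B) (hε : 0 < ε)
    (hεs : ε ≤ s) (hs : s ≤ 1) (hq : q ∈ Icc 0 1) (h : a13Numerator A B C G ε s q = 0) :
    C - max G 0 ≤ A * (q + (1 - q) * s) := by
  set x := q + (1 - q) * s
  obtain ⟨hq0, hq1⟩ := hq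
  have hεx : ε ≤ x := by nlinarith
  have hx : 0 < x := hε.trans_le hεx
  have hG : G * ε * (1 - q) * (1 - s) ≤ max G 0 * x := by
    have hw0 : 0 ≤ ε * ((1 - q) * (1 - s)) := by
      have : 0 ≤ (1 - q) * (1 - s) := mul_nonneg (by linarith) (by linarith)
      positivity
    have hw1 : ε * ((1 - q) * (1 - s)) ≤ x := by nlinarith
    calc G * ε * (1 - q) * (1 - s) = G * (ε * ((1 - q) * (1 - s))) := by ring
      _ ≤ max G 0 * (ε * ((1 - q) * (1 - s))) := by gcongr; exact le_max_left G 0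
      _ ≤ max G 0 * x := by gcongr
  unfold a13Numerator at h
  refine le_of_mul_le_mul_right ?_ hx
  nlinarith [mul_nonneg (mul_nonneg hB (hε.le.trans hεs)) hx.le]

variable {q₀ α : ℝ}

/-- Here `(1 - q₀) * s - α * ε * (1 - s)` is `x(q₀ - α ε) - q₀`. -/
theorem a13Numerator_approx_eq (hA : A = B + C) (hq₀ : A * q₀ = C) (hα : C * α = G * (1 - q₀))
    (ε s : ℝ) :
    a13Numerator A B C G ε s (q₀ - α * ε) =
      A * ((1 - q₀) * s - α * ε * (1 - s)) ^ 2 - B * s * ((1 - q₀) * s - α * ε * (1 - s))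
        + G * α * ε ^ 2 * (1 - s) := by
  unfold a13Numerator
  linear_combination (2 * ((1 - q₀) * s - α * ε * (1 - s)) + q₀ - s) * hq₀
    + (s * q₀) * hA - (ε * (1 - s)) * hα

theorem abs_approxShift_le {ε s : ℝ} (hq₀ : q₀ ∈ Icc 0 1) (hε : 0 ≤ ε) (hεs : ε ≤ s)
    (hs : s ≤ 1) :
    |(1 - q₀) * s - α * ε * (1 - s)| ≤ (1 + |α|) * s := by
  obtain ⟨h0, h1⟩ := hq₀
  have hs0 : 0 ≤ s := hε.trans hεs
  calc |(1 - q₀) * s - α * ε * (1 - s)| ≤ |(1 - q₀) * s| + |α * ε * (1 - s)| := abs_sub _ _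
    _ = (1 - q₀) * s + |α| * (ε * (1 - s)) := by
      rw [abs_of_nonneg (by nlinarith), mul_assoc, abs_mul,
        abs_of_nonneg (mul_nonneg hε (by linarith : 0 ≤ 1 - s))]
    _ ≤ 1 * s + |α| * s := by gcongr <;> nlinarith
    _ = (1 + |α|) * s := by ring

theorem abs_a13Numerator_approx_le (hA : A = B + C) (hB : 0 ≤ B) (hC : 0 ≤ C)
    (hq₀ : A * q₀ = C) (hq₀mem : q₀ ∈ Icc 0 1) (hα : C * α = G * (1 - q₀)) {ε s : ℝ}
    (hε : 0 ≤ ε) (hεs : ε ≤ s) (hs : s ≤ 1) :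
    |a13Numerator A B C G ε s (q₀ - α * ε)|
      ≤ (A * (1 + |α|) ^ 2 + B * (1 + |α|) + |G * α|) * s ^ 2 := by
  rw [a13Numerator_approx_eq hA hq₀ hα]
  set δ := (1 - q₀) * s - α * ε * (1 - s)
  have hδ : |δ| ≤ (1 + |α|) * s := abs_approxShift_le hq₀mem hε hεs hs
  have hs0 : 0 ≤ s := hε.trans hεs
  have hA0 : 0 ≤ A := by linarith
  calc |A * δ ^ 2 - B * s * δ + G * α * ε ^ 2 * (1 - s)|
      ≤ A * |δ| ^ 2 + B * s * |δ| + |G * α| * (ε ^ 2 * (1 - s)) := by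
        refine (abs_add_le _ _).trans
          (add_le_add ((abs_sub _ _).trans (le_of_eq ?_)) (le_of_eq ?_))
        · rw [abs_mul, abs_mul, abs_mul, abs_pow, abs_of_nonneg hA0, abs_of_nonneg hB,
            abs_of_nonneg hs0]
        · rw [mul_assoc, abs_mul, abs_of_nonneg (by nlinarith : 0 ≤ ε ^ 2 * (1 - s))]
    _ ≤ A * ((1 + |α|) * s) ^ 2 + B * s * ((1 + |α|) * s) + |G * α| * (s ^ 2 * 1) := by
        gcongr
        nlinarith
    _ = (A * (1 + |α|) ^ 2 + B * (1 + |α|) + |G * α|) * s ^ 2 := by ring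

theorem sub_max_div_four_le_a13Slope (hA : 0 ≤ A) (hB : 0 ≤ B) (hq₀ : A * q₀ = C)
    (hq₀mem : q₀ ∈ Icc 0 1) {ε s q : ℝ} (hε : 0 < ε) (hεs : ε ≤ s) (hs : s ≤ 1 / 2)
    (hsmall : (A * (1 + |α|) + B + |G|) * s ≤ (C - max G 0) / 2) (hq : q ∈ Icc 0 1)
    (h : a13Numerator A B C G ε s q = 0) :
    (C - max G 0) / 4 ≤ a13Slope A B C G ε s q (q₀ - α * ε) := by
  have hx := sub_max_le_mul_of_a13Numerator_eq_zero hB hε hεs (by linarith) hq h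
  have hδ := abs_le.1 (abs_approxShift_le (α := α) hq₀mem hε.le hεs (by linarith))
  have hGε : G * ε ≤ |G| * s :=
    (mul_le_mul_of_nonneg_right (le_abs_self G) hε.le).trans (by gcongr)
  have hslope : (C - max G 0) / 2 ≤ A * (q + (1 - q) * s
      + (q₀ - α * ε + (1 - (q₀ - α * ε)) * s)) - (C + B * s) - G * ε := by
    nlinarith [mul_le_mul_of_nonneg_left hδ.1 hA]
  have hm : 0 ≤ C - max G 0 := by
    have : 0 ≤ (A * (1 + |α|) + B + |G|) * s := by have := hε.le.trans hεs; positivity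
    linarith
  unfold a13Slope
  nlinarith

theorem exists_abs_sub_le_sq_of_a13Numerator_eq_zero (hA : A = B + C) (hB : 0 ≤ B) (hC : 0 < C)
    (hGC : G < C) (hq₀ : A * q₀ = C) (hα : C * α = G * (1 - q₀)) :
    ∃ K s₀ : ℝ, 0 < K ∧ 0 < s₀ ∧ ∀ ε s q : ℝ, 0 < ε → ε ≤ s → s < s₀ → q ∈ Icc 0 1 →
      a13Numerator A B C G ε s q = 0 → |q - (q₀ - α * ε)| ≤ K * s ^ 2 := by
  have hA0 : 0 < A := by linarith
  have hq₀mem : q₀ ∈ Icc 0 1 := by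
    rw [eq_div_of_mul_eq hA0.ne' (by rw [mul_comm, hq₀] : q₀ * A = C)]
    exact ⟨by positivity, (div_le_one hA0).2 (by linarith)⟩
  set m := C - max G 0
  set N := A * (1 + |α|) + B + |G|
  set M := A * (1 + |α|) ^ 2 + B * (1 + |α|) + |G * α|
  have hm : 0 < m := sub_pos.2 (max_lt hGC hC)
  have hN : 0 < N := by positivity
  have hM : 0 < M := by positivity
  refine ⟨4 * M / m, min (1 / 2) (m / (2 * N)), by positivity, by positivity, ?_⟩
  intro ε s q hε hεs hs hq h
  have hs₁ : s ≤ 1 / 2 := (hs.trans_le (min_le_left _ _)).le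
  have hsN : N * s ≤ m / 2 := by
    have := (hs.trans_le (min_le_right _ _)).le
    rw [le_div_iff₀ (by positivity)] at this
    linarith
  have hslope := sub_max_div_four_le_a13Slope hA0.le hB hq₀ hq₀mem hε hεs hs₁ hsN hq h
  have hrem := abs_a13Numerator_approx_le hA hB hC.le hq₀ hq₀mem hα hε.le hεs (by linarith)
  have hroot := a13Numerator_sub A B C G ε s q (q₀ - α * ε)
  rw [h, zero_sub] at hroot
  rw [div_mul_eq_mul_div, le_div_iff₀ hm]
  calc |q - (q₀ - α * ε)| * m = 4 * (|q - (q₀ - α * ε)| * (m / 4)) := by ring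
    _ ≤ 4 * |a13Numerator A B C G ε s (q₀ - α * ε)| := by
      rw [← abs_neg (a13Numerator _ _ _ _ _ _ _), hroot, abs_mul]
      gcongr
      exact hslope.trans (le_abs_self _)
    _ ≤ 4 * M * s ^ 2 := by linarith

end

theorem stmt_12_general (T R P S : ℝ) (hTR : T > R) (hRP : R > P)
    (hup : (S + T) / 2 < R) :
    ∃ K r0 : ℝ, 0 < K ∧ 0 < r0 ∧
      ∀ ε1 ε2 : ℝ, 0 < ε1 → 0 < ε2 → Real.sqrt (ε1 ^ 2 + ε2 ^ 2) < r0 →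
        ∀ qgreen ∈ Set.Ioo (0 : ℝ) 1, a13 T R P S ε1 ε2 qgreen = R →
          |qgreen - (2 * R - S - T) / (R - S)
              + ((R - T) + (P - S)) * (T - R) * ε1 / ((R - S) * (2 * R - S - T))|
            ≤ K * (ε1 ^ 2 + ε2 ^ 2) := by
  have hRS : R - S ≠ 0 := by linarith
  have hC : 2 * R - S - T ≠ 0 := by linarith
  obtain ⟨K, s₀, hK, hs₀, happrox⟩ := exists_abs_sub_le_sq_of_a13Numerator_eq_zero
    (A := R - S) (B := T - R) (C := 2 * R - S - T) (G := (R - T) + (P - S))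
    (q₀ := (2 * R - S - T) / (R - S))
    (α := ((R - T) + (P - S)) * (T - R) / ((R - S) * (2 * R - S - T)))
    (by ring) (by linarith) (by linarith) (by linarith) (by field_simp) (by field_simp; ring)
  refine ⟨2 * K, min s₀ 1 / 2, by positivity, by positivity, ?_⟩
  intro ε1 ε2 hε1 hε2 hr q hq hq_root
  have hs : ε1 + ε2 < min s₀ 1 := by
    have : (ε1 + ε2) / 2 ≤ √(ε1 ^ 2 + ε2 ^ 2) :=
      (Real.le_sqrt (by positivity) (by positivity)).2 (by nlinarith [sq_nonneg (ε1 - ε2)])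
    linarith
  have hnum := a13Numerator_eq_zero_of_a13_eq hε1.ne'
    (by nlinarith [hq.1, hq.2]) (by linarith [min_le_right s₀ 1]) hq_root
  calc _ = |q - ((2 * R - S - T) / (R - S)
          - ((R - T) + (P - S)) * (T - R) / ((R - S) * (2 * R - S - T)) * ε1)| := by ring_nf
    _ ≤ K * (ε1 + ε2) ^ 2 :=
      happrox ε1 (ε1 + ε2) q hε1 (by linarith) (hs.trans_le (min_le_left _ _))
        (Ioo_subset_Icc_self hq) hnum
    _ ≤ 2 * K * (ε1 ^ 2 + ε2 ^ 2) := by nlinarith [sq_nonneg (ε1 - ε2)]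

theorem stmt_12 (T R P S : ℝ) (hTR : T > R) (hRP : R > P) (hPS : P > S)
    (hlow : P < (S + T) / 2) (hup : (S + T) / 2 < R) :
    ∃ K r0 : ℝ, 0 < K ∧ 0 < r0 ∧
      ∀ ε1 ε2 : ℝ, 0 < ε1 → 0 < ε2 → Real.sqrt (ε1 ^ 2 + ε2 ^ 2) < r0 →
        ∀ qgreen ∈ Set.Ioo (0 : ℝ) 1, a13 T R P S ε1 ε2 qgreen = R →
          |qgreen - (2 * R - S - T) / (R - S)
              + ((R - T) + (P - S)) * (T - R) * ε1 / ((R - S) * (2 * R - S - T))|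
            ≤ K * (ε1 ^ 2 + ε2 ^ 2) :=
  stmt_12_general T R P S hTR hRP hup
end
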